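/- Let 0 ≤ ε < 4 and let F: ℝ → [0,1] and T: ℝ → [0,1] be monotonically nonincreasing functions with F(t) → 1, T(t) → 1 as t → −∞ and F(t) → 0, T(t) → 0 as t → +∞, satisfying T(t) ≤ min(F(t) + √ε/2, 1) for all t. Then the Riemann–Stieltjes integral ∫ T(t) dF(t) (taken so the area under the parametric ROC curve t ↦ (F(t), T(t)) is computed, i.e., from t = +∞ to t = −∞) is at most 1/2 + √ε/2 − ε/8. -/

import Mathlib

/-!
If `μ (Ioc a b) = F a - F b` and `F → 1` at `-∞`, then `μ (Iic m) = 1 - F m`. A compact subset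
of the lower set `{u ≤ F}` lies in `Iic m` for its maximum `m`, so by inner regularity
`μ {u ≤ F} ≤ 1 - u`: under `μ`, the law of `F` is stochastically dominated by the uniform law
on `[0, 1]`.
With `c = 1 - √ε / 2` and `g = max (c - F) 0`, the hypothesis gives `T ≤ 1 - g`, and the
layer-cake formula gives `∫ g ∂μ ≥ ∫₀ᶜ μ {F < c - t} dt ≥ ∫₀ᶜ (c - t) dt = c² / 2`.
-/

open MeasureTheory Filter Set Topology

section StieltjesMeasure

variable {F : ℝ → ℝ} {μ : Measure ℝ} {L : ℝ}

theorem measure_Iic_eq_of_measure_Ioc (hbot : Tendsto F atBot (𝓝 L))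
    (hμ : ∀ a b, a ≤ b → μ (Ioc a b) = ENNReal.ofReal (F a - F b)) (x : ℝ) :
    μ (Iic x) = ENNReal.ofReal (L - F x) := by
  refine tendsto_nhds_unique (tendsto_measure_Ioc_atBot μ x) ?_
  refine ((ENNReal.continuous_ofReal.tendsto _).comp (hbot.sub_const (F x))).congr' ?_
  filter_upwards [eventually_le_atBot x] with a ha
  exact (hμ a x ha).symm

theorem measure_univ_eq_of_measure_Ioc {l : ℝ} (hbot : Tendsto F atBot (𝓝 L))
    (htop : Tendsto F atTop (𝓝 l))
    (hμ : ∀ a b, a ≤ b → μ (Ioc a b) = ENNReal.ofReal (F a - F b)) :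
    μ univ = ENNReal.ofReal (L - l) := by
  refine tendsto_nhds_unique (tendsto_measure_Iic_atTop μ) ?_
  simp_rw [measure_Iic_eq_of_measure_Ioc hbot hμ]
  exact (ENNReal.continuous_ofReal.tendsto _).comp (htop.const_sub L)

theorem measure_setOf_le_apply_le_of_measure_Ioc [IsFiniteMeasure μ] (hF : Antitone F)
    (hbot : Tendsto F atBot (𝓝 L))
    (hμ : ∀ a b, a ≤ b → μ (Ioc a b) = ENNReal.ofReal (F a - F b)) (u : ℝ) :
    μ {a | u ≤ F a} ≤ ENNReal.ofReal (L - u) := by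
  rw [(measurableSet_le measurable_const hF.measurable).measure_eq_iSup_isCompact]
  refine iSup₂_le fun K hK => iSup_le fun hKc => ?_
  rcases K.eq_empty_or_nonempty with rfl | hne
  · simp
  obtain ⟨m, hmK, hmax⟩ := hKc.exists_isGreatest hne
  calc μ K ≤ μ (Iic m) := measure_mono hmax
    _ = ENNReal.ofReal (L - F m) := measure_Iic_eq_of_measure_Ioc hbot hμ m
    _ ≤ ENNReal.ofReal (L - u) :=
      ENNReal.ofReal_le_ofReal (by linarith [show u ≤ F m from hK hmK])

theorem ofReal_le_measure_setOf_apply_lt_of_measure_Ioc [IsProbabilityMeasure μ] (hF : Antitone F)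
    (hbot : Tendsto F atBot (𝓝 1))
    (hμ : ∀ a b, a ≤ b → μ (Ioc a b) = ENNReal.ofReal (F a - F b)) {u : ℝ}
    (hu : u ≤ 1) :
    ENNReal.ofReal u ≤ μ {a | F a < u} := by
  have hcompl : {a | F a < u} = {a | u ≤ F a}ᶜ := by ext; simp
  rw [hcompl, prob_compl_eq_one_sub (measurableSet_le measurable_const hF.measurable)]
  calc ENNReal.ofReal u = 1 - ENNReal.ofReal (1 - u) := by
        rw [← ENNReal.ofReal_one, ← ENNReal.ofReal_sub _ (sub_nonneg.2 hu), sub_sub_cancel]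
    _ ≤ 1 - μ {a | u ≤ F a} :=
      tsub_le_tsub_left (measure_setOf_le_apply_le_of_measure_Ioc hF hbot hμ u) 1

end StieltjesMeasure

theorem sq_div_two_le_integral_of_sub_le_measure_lt {α : Type*} [MeasurableSpace α]
    {μ : Measure α} {g : α → ℝ} {c : ℝ} (hc : 0 ≤ c) (hg_nonneg : 0 ≤ g) (hg : Integrable g μ)
    (h : ∀ t ∈ Ioc 0 c, ENNReal.ofReal (c - t) ≤ μ {a | t < g a}) :
    c ^ 2 / 2 ≤ ∫ a, g a ∂μ := by
  have htri : ∫ t in Ioc 0 c, (c - t) = c ^ 2 / 2 := by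
    rw [← intervalIntegral.integral_of_le hc, intervalIntegral.integral_comp_sub_left fun t => t]
    simp
  have htri_nonneg : 0 ≤ᵐ[volume.restrict (Ioc 0 c)] fun t => c - t := by
    filter_upwards [ae_restrict_mem measurableSet_Ioc] with t ht
    exact sub_nonneg.2 ht.2
  rw [← ENNReal.ofReal_le_ofReal_iff (integral_nonneg hg_nonneg), ← htri,
    ofReal_integral_eq_lintegral_ofReal hg (Eventually.of_forall hg_nonneg),
    lintegral_eq_lintegral_meas_lt μ (Eventually.of_forall hg_nonneg) hg.aemeasurable,
    ofReal_integral_eq_lintegral_ofReal (by fun_prop : Continuous fun t => c - t).integrableOn_Ioc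
      htri_nonneg]
  calc ∫⁻ t in Ioc 0 c, ENNReal.ofReal (c - t)
      ≤ ∫⁻ t in Ioc 0 c, μ {a | t < g a} := setLIntegral_mono' measurableSet_Ioc h
    _ ≤ ∫⁻ t in Ioi 0, μ {a | t < g a} := lintegral_mono_set Ioc_subset_Ioi_self

/-- The Riemann–Stieltjes integral `∫_{t=∞}^{t=−∞} T(t) dF(t)` is modelled as `∫ t, T t ∂μ` for
any measure `μ` with `μ (Ioc a b) = F a − F b` for `a ≤ b`. -/
theorem roc_auc_upper_bound_general (ε : ℝ) (hε0 : 0 ≤ ε) (hε4 : ε < 4)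
    (F T : ℝ → ℝ)
    (hFrange : ∀ t, F t ∈ Set.Icc (0 : ℝ) 1) (hTrange : ∀ t, T t ∈ Set.Icc (0 : ℝ) 1)
    (hFmono : ∀ s t, s ≤ t → F t ≤ F s)
    (hFbot : Tendsto F atBot (nhds 1)) (hFtop : Tendsto F atTop (nhds 0))
    (hdom : ∀ t, T t ≤ min (F t + Real.sqrt ε / 2) 1)
    (μ : Measure ℝ)
    (hμ : ∀ a b, a ≤ b → μ (Set.Ioc a b) = ENNReal.ofReal (F a - F b)) :
    ∫ t, T t ∂μ ≤ 1 / 2 + Real.sqrt ε / 2 - ε / 8 := by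
  have hF : Antitone F := fun s t hst => hFmono s t hst
  have : IsProbabilityMeasure μ :=
    ⟨by simpa using measure_univ_eq_of_measure_Ioc hFbot hFtop hμ⟩
  set c := 1 - √ε / 2 with hc_def
  have hc : 0 ≤ c := by
    have : √ε < 2 := by rw [Real.sqrt_lt' two_pos]; linarith
    linarith
  set g : ℝ → ℝ := fun t => max (c - F t) 0
  have hg_nonneg : 0 ≤ g := fun t => le_max_right _ _
  have hg : Integrable g μ := by
    refine .of_bound (C := c) (Monotone.measurable fun s t hst => ?_).aestronglyMeasurable
      (ae_of_all _ fun t => ?_)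
    · exact max_le_max_right 0 (sub_le_sub_left (hF hst) c)
    · rw [Real.norm_of_nonneg (hg_nonneg t)]
      exact max_le (by linarith [(hFrange t).1]) hc
  have hTg : ∀ t, T t ≤ 1 - g t := fun t => by
    have := hdom t
    simp only [g, hc_def] at this ⊢
    grind
  have hg_tail : ∀ t ∈ Ioc 0 c, ENNReal.ofReal (c - t) ≤ μ {a | t < g a} := fun t ht =>
    (ofReal_le_measure_setOf_apply_lt_of_measure_Ioc hF hFbot hμ
      (by linarith [ht.1, Real.sqrt_nonneg ε])).trans
      (measure_mono fun a (ha : F a < c - t) => lt_max_of_lt_left (show t < c - F a by linarith))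
  calc ∫ t, T t ∂μ ≤ ∫ t, (1 - g t) ∂μ :=
        integral_mono_of_nonneg (ae_of_all _ fun t => (hTrange t).1)
          ((integrable_const 1).sub hg) (ae_of_all _ hTg)
    _ = 1 - ∫ t, g t ∂μ := by simp [integral_sub (integrable_const 1) hg]
    _ ≤ 1 - c ^ 2 / 2 := by
      linarith [sq_div_two_le_integral_of_sub_le_measure_lt hc hg_nonneg hg hg_tail]
    _ = 1 / 2 + √ε / 2 - ε / 8 := by
      rw [hc_def]; linear_combination (-1 / 8 : ℝ) * Real.sq_sqrt hε0

/-- The ROC-area Riemann–Stieltjes integral `∫_{t=∞}^{t=−∞} T(t) dF(t)` for a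
nonincreasing `F` is formalized as the Lebesgue integral of `T` against the
(positive) Lebesgue–Stieltjes measure `μ` of `F` traversed from `+∞` to `−∞`,
i.e. any measure `μ` with `μ (Ioc a b) = F a − F b` for `a ≤ b`. -/
theorem roc_auc_upper_bound (ε : ℝ) (hε0 : 0 ≤ ε) (hε4 : ε < 4)
    (F T : ℝ → ℝ)
    (hFrange : ∀ t, F t ∈ Set.Icc (0 : ℝ) 1) (hTrange : ∀ t, T t ∈ Set.Icc (0 : ℝ) 1)
    (hFmono : ∀ s t, s ≤ t → F t ≤ F s) (hTmono : ∀ s t, s ≤ t → T t ≤ T s)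
    (hFbot : Tendsto F atBot (nhds 1)) (hFtop : Tendsto F atTop (nhds 0))
    (hTbot : Tendsto T atBot (nhds 1)) (hTtop : Tendsto T atTop (nhds 0))
    (hdom : ∀ t, T t ≤ min (F t + Real.sqrt ε / 2) 1)
    (μ : Measure ℝ) [IsFiniteMeasure μ]
    (hμ : ∀ a b, a ≤ b → μ (Set.Ioc a b) = ENNReal.ofReal (F a - F b)) :
    ∫ t, T t ∂μ ≤ 1 / 2 + Real.sqrt ε / 2 - ε / 8 :=
  roc_auc_upper_bound_general ε hε0 hε4 F T hFrange hTrange hFmono hFbot hFtop hdom μ hμ
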